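/- arXiv:1508.07205 — 8 statements merged into one kernel-verified Lean document; each statement's English description precedes it below -/
import Mathlib

section
/- The images in R of the six monomials 1, u3, u3^2, u2, u2·u3, u2·u3^2 form a basis of R as an F2-vector space, where R is the quotient of F2[u1,u2,u3] by the ideal generated by u1+u2+u3, u1u2+u1u3+u2u3, and u1u2u3. -/
open MvPolynomial

/-- The ideal generated by the three elementary symmetric polynomials in
`F2[u1,u2,u3]`, with `u1 = X 0`, `u2 = X 1`, `u3 = X 2`. -/
noncomputable abbrev symIdeal : Ideal (MvPolynomial (Fin 3) (ZMod 2)) :=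
  Ideal.span ({X 0 + X 1 + X 2,
               X 0 * X 1 + X 0 * X 2 + X 1 * X 2,
               X 0 * X 1 * X 2} : Set (MvPolynomial (Fin 3) (ZMod 2)))

/-!
Over any commutative ring `k`, `k[u₁,u₂,u₃]/(e₁,e₂,e₃)` is the universal splitting algebra of
`t³ = (t - u₁)(t - u₂)(t - u₃)`. Adjoining a root `β` of `t³` gives `k[β]/(β³)`; since
`t³ - β³ = (t - β)(t² + βt + β²)`, adjoining a root `α` of the quadratic factor leaves the
linear factor `t + α + β`. So `u₁ ↦ -(α + β)`, `u₂ ↦ α`, `u₃ ↦ β` is an isomorphism onto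
`k[β]/(β³)[α]/(α² + βα + β²)`, a tower of free extensions with power bases `1, β, β²` and
`1, α`, whose products are the six monomials.
-/

noncomputable section

variable (k : Type*) [CommRing k]

abbrev coinvariantIdeal : Ideal (MvPolynomial (Fin 3) k) :=
  Ideal.span {X 0 + X 1 + X 2, X 0 * X 1 + X 0 * X 2 + X 1 * X 2, X 0 * X 1 * X 2}

abbrev CoinvariantAlgebra : Type _ := MvPolynomial (Fin 3) k ⧸ coinvariantIdeal k

abbrev TruncCube : Type _ := AdjoinRoot (Polynomial.X ^ 3 : Polynomial k)

def cubeQuotient : Polynomial (TruncCube k) :=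
  Polynomial.X ^ 2 + Polynomial.C (AdjoinRoot.root _) * Polynomial.X +
    Polynomial.C (AdjoinRoot.root _) ^ 2

abbrev SplitCube : Type _ := AdjoinRoot (cubeQuotient k)

variable {k}

namespace SplitCube

def quadRoot : SplitCube k := AdjoinRoot.root (cubeQuotient k)

def cubeRoot : SplitCube k := AdjoinRoot.of (cubeQuotient k) (AdjoinRoot.root _)

def roots : Fin 3 → SplitCube k := ![-(quadRoot + cubeRoot), quadRoot, cubeRoot]

lemma cubeRoot_pow_three : (cubeRoot : SplitCube k) ^ 3 = 0 := by
  have h := AdjoinRoot.eval₂_root (Polynomial.X ^ 3 : Polynomial k)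
  rw [Polynomial.eval₂_X_pow] at h
  rw [cubeRoot, ← map_pow, h, map_zero]

lemma quadRoot_sq_add : (quadRoot ^ 2 + cubeRoot * quadRoot + cubeRoot ^ 2 : SplitCube k) = 0 := by
  have h : AdjoinRoot.mk (cubeQuotient k) (cubeQuotient k) = 0 := AdjoinRoot.mk_self
  rw [cubeQuotient] at h
  simp only [map_add, map_mul, map_pow, AdjoinRoot.mk_X, AdjoinRoot.mk_C] at h
  exact h

lemma coinvariantIdeal_le_ker_aeval_roots :
    coinvariantIdeal k ≤ RingHom.ker (aeval (roots : Fin 3 → SplitCube k)) := by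
  have hα := quadRoot_sq_add (k := k)
  have hβ := cubeRoot_pow_three (k := k)
  rw [Ideal.span_le]
  rintro p (rfl | rfl | rfl) <;>
    simp only [SetLike.mem_coe, RingHom.mem_ker, map_add, map_mul, aeval_X, roots,
      Matrix.cons_val_zero, Matrix.cons_val_one, Matrix.cons_val]
  · ring
  · linear_combination -hα
  · linear_combination -cubeRoot * hα + hβ

end SplitCube

namespace CoinvariantAlgebra

open SplitCube

def u (i : Fin 3) : CoinvariantAlgebra k := Ideal.Quotient.mk _ (X i)

variable (k) in
lemma e₁_eq_zero : (u 0 + u 1 + u 2 : CoinvariantAlgebra k) = 0 :=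
  Ideal.Quotient.eq_zero_iff_mem.mpr (Ideal.subset_span (by simp))

variable (k) in
lemma e₂_eq_zero : (u 0 * u 1 + u 0 * u 2 + u 1 * u 2 : CoinvariantAlgebra k) = 0 :=
  Ideal.Quotient.eq_zero_iff_mem.mpr (Ideal.subset_span (by simp))

variable (k) in
lemma e₃_eq_zero : (u 0 * u 1 * u 2 : CoinvariantAlgebra k) = 0 :=
  Ideal.Quotient.eq_zero_iff_mem.mpr (Ideal.subset_span (by simp))

lemma u_zero : (u 0 : CoinvariantAlgebra k) = -(u 1 + u 2) := by
  linear_combination e₁_eq_zero k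

lemma u_one_sq_add : (u 1 ^ 2 + u 2 * u 1 + u 2 ^ 2 : CoinvariantAlgebra k) = 0 := by
  linear_combination (u 1 + u 2) * e₁_eq_zero k - e₂_eq_zero k

lemma u_two_pow_three : (u 2 ^ 3 : CoinvariantAlgebra k) = 0 := by
  linear_combination u 2 ^ 2 * e₁_eq_zero k - u 2 * e₂_eq_zero k + e₃_eq_zero k

def toSplitCube : CoinvariantAlgebra k →ₐ[k] SplitCube k :=
  Ideal.Quotient.liftₐ _ (aeval roots) fun _ hp =>
    RingHom.mem_ker.mp (coinvariantIdeal_le_ker_aeval_roots hp)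

def ofSplitCube : SplitCube k →ₐ[k] CoinvariantAlgebra k :=
  AdjoinRoot.liftAlgHom _
    (AdjoinRoot.liftAlgHom _ (Algebra.ofId k _) (u 2) (by simpa using u_two_pow_three (k := k)))
    (u 1) (by simpa [cubeQuotient, Polynomial.eval₂_pow] using u_one_sq_add (k := k))

lemma toSplitCube_u (i : Fin 3) : toSplitCube (u i) = (roots i : SplitCube k) :=
  aeval_X _ i

lemma ofSplitCube_quadRoot : ofSplitCube (quadRoot : SplitCube k) = u 1 := by
  simp [ofSplitCube, quadRoot]

lemma ofSplitCube_cubeRoot : ofSplitCube (cubeRoot : SplitCube k) = u 2 := by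
  simp [ofSplitCube, cubeRoot]

def equivSplitCube : CoinvariantAlgebra k ≃ₐ[k] SplitCube k :=
  AlgEquiv.ofAlgHom toSplitCube ofSplitCube
    (by
      ext
      · change toSplitCube (ofSplitCube cubeRoot) = cubeRoot
        rw [ofSplitCube_cubeRoot, toSplitCube_u]
        rfl
      · change toSplitCube (ofSplitCube quadRoot) = quadRoot
        rw [ofSplitCube_quadRoot, toSplitCube_u]
        rfl)
    (by
      refine Ideal.Quotient.algHom_ext _ (MvPolynomial.algHom_ext fun i => ?_)
      change ofSplitCube (toSplitCube (u i)) = u i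
      rw [toSplitCube_u]
      fin_cases i
      · simp [roots, ofSplitCube_quadRoot, ofSplitCube_cubeRoot, u_zero]
      · exact ofSplitCube_quadRoot
      · exact ofSplitCube_cubeRoot)

end CoinvariantAlgebra

lemma cubeQuotient_monic : (cubeQuotient k).Monic := by
  unfold cubeQuotient
  rw [add_assoc]
  exact Polynomial.monic_X_pow_add (by compute_degree!)

section Basis

variable [Nontrivial k]

instance : Nontrivial (TruncCube k) :=
  Ideal.Quotient.nontrivial_iff.mpr (by simp [Polynomial.not_isUnit_X])

lemma natDegree_cubeQuotient : (cubeQuotient k).natDegree = 2 := by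
  unfold cubeQuotient
  compute_degree!

def TruncCube.basis : Module.Basis (Fin 3) k (TruncCube k) :=
  (AdjoinRoot.powerBasis' (Polynomial.monic_X_pow 3)).basis.reindex (finCongr (by simp))

lemma TruncCube.basis_apply (i : Fin 3) :
    TruncCube.basis i = (AdjoinRoot.root (Polynomial.X ^ 3 : Polynomial k)) ^ (i : ℕ) := by
  simp [TruncCube.basis]

def SplitCube.basis : Module.Basis (Fin 3 × Fin 2) k (SplitCube k) :=
  TruncCube.basis.smulTower
    ((AdjoinRoot.powerBasis' cubeQuotient_monic).basis.reindex (finCongr natDegree_cubeQuotient))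

lemma SplitCube.basis_apply (i : Fin 3) (j : Fin 2) :
    SplitCube.basis (i, j) = (cubeRoot ^ (i : ℕ) * quadRoot ^ (j : ℕ) : SplitCube k) := by
  simp only [SplitCube.basis, Module.Basis.smulTower_apply, TruncCube.basis_apply,
    Module.Basis.coe_reindex, PowerBasis.coe_basis, AdjoinRoot.powerBasis'_gen, Function.comp_apply,
    Algebra.smul_def, AdjoinRoot.algebraMap_eq, map_pow, cubeRoot, quadRoot]
  rfl

def CoinvariantAlgebra.basis : Module.Basis (Fin 6) k (CoinvariantAlgebra k) :=
  (SplitCube.basis.map CoinvariantAlgebra.equivSplitCube.symm.toLinearEquiv).reindex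
    ((Equiv.prodComm _ _).trans finProdFinEquiv)

lemma CoinvariantAlgebra.basis_apply (n : Fin 6) :
    CoinvariantAlgebra.basis n =
      Ideal.Quotient.mk (coinvariantIdeal k) (X 1 ^ (n / 3 : ℕ) * X 2 ^ (n % 3 : ℕ)) := by
  rw [CoinvariantAlgebra.basis, Module.Basis.reindex_apply, Module.Basis.map_apply,
    Equiv.symm_trans_apply, finProdFinEquiv_symm_apply, Equiv.prodComm_symm, Equiv.prodComm_apply,
    Prod.swap_prod_mk, SplitCube.basis_apply]
  simp only [CoinvariantAlgebra.equivSplitCube, AlgEquiv.toLinearEquiv_symm,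
    AlgEquiv.coe_symm_toLinearEquiv, AlgEquiv.ofAlgHom_symm_apply, map_mul, map_pow,
    CoinvariantAlgebra.ofSplitCube_cubeRoot, CoinvariantAlgebra.ofSplitCube_quadRoot,
    CoinvariantAlgebra.u, Fin.coe_modNat, Fin.coe_divNat]
  exact mul_comm _ _

end Basis

end

/-- The images in `R = F2[u1,u2,u3]/(e1,e2,e3)` of the six monomials
`1, u3, u3², u2, u2·u3, u2·u3²` form a basis of `R` over `F2`. -/
theorem stmt3 :
    ∃ b : Module.Basis (Fin 6) (ZMod 2) (MvPolynomial (Fin 3) (ZMod 2) ⧸ symIdeal),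
      b 0 = Ideal.Quotient.mk symIdeal 1 ∧
      b 1 = Ideal.Quotient.mk symIdeal (X 2) ∧
      b 2 = Ideal.Quotient.mk symIdeal (X 2 ^ 2) ∧
      b 3 = Ideal.Quotient.mk symIdeal (X 1) ∧
      b 4 = Ideal.Quotient.mk symIdeal (X 1 * X 2) ∧
      b 5 = Ideal.Quotient.mk symIdeal (X 1 * X 2 ^ 2) := by
  refine ⟨CoinvariantAlgebra.basis, ?_, ?_, ?_, ?_, ?_, ?_⟩ <;>
    simp [CoinvariantAlgebra.basis_apply]
end

section
/- Let k1, k2, k3 be natural numbers with k1 + k2 + k3 = 3. Then the image of the monomial u1^{k1}·u2^{k2}·u3^{k3} in R is nonzero if and only if (k1,k2,k3) is a permutation of (0,1,2), where R is the quotient of F2[u1,u2,u3] by the ideal generated by u1+u2+u3, u1u2+u1u3+u2u3, and u1u2u3. -/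
open MvPolynomial

/-!
The degree-3 monomials `u^k` with `k` not a permutation of `(0,1,2)` are the cubes `u_i^3` and
`u1 u2 u3`; both lie in the ideal, since `x^3 = x^2 e1 - x e2 + e3` for each variable `x`.
For the others, let `theta` be the linear form summing the coefficients of the six monomials whose
exponent is a permutation of `(0,1,2)`, so `theta (u^k) = Θ(k)`. It vanishes on every multiple
`p * e_j` of a generator, because each coefficient of `p` that contributes does so exactly twice,
and hence on the whole ideal; since `theta (u^k) = 1`, `u^k` is not in the ideal.
-/

theorem Ideal.map_eq_zero_of_mem_span {A M : Type*} [CommSemiring A] [AddCommMonoid M]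
    (f : A →+ M) {s : Set A} (hs : ∀ g ∈ s, ∀ p, f (p * g) = 0) {x : A}
    (hx : x ∈ Ideal.span s) : f x = 0 := by
  suffices ∀ p, f (p * x) = 0 by simpa using this 1
  induction hx using Submodule.span_induction with
  | mem g hg => exact hs g hg
  | zero => simp
  | add x y _ _ hx hy => intro p; rw [mul_add, map_add, hx, hy, add_zero]
  | smul a x _ hx => intro p; rw [smul_eq_mul, ← mul_assoc]; exact hx _

theorem pow_three_eq_zero_of_esymm_eq_zero {A : Type*} [CommRing A] {x y z : A}
    (h₁ : x + y + z = 0) (h₂ : x * y + x * z + y * z = 0) (h₃ : x * y * z = 0) :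
    x ^ 3 = 0 ∧ y ^ 3 = 0 ∧ z ^ 3 = 0 :=
  ⟨by linear_combination x ^ 2 * h₁ - x * h₂ + h₃, by linear_combination y ^ 2 * h₁ - y * h₂ + h₃,
    by linear_combination z ^ 2 * h₁ - z * h₂ + h₃⟩

noncomputable def exponent (a b c : ℕ) : Fin 3 →₀ ℕ :=
  Finsupp.single 0 a + Finsupp.single 1 b + Finsupp.single 2 c

@[simp] lemma exponent_apply_zero (a b c : ℕ) : exponent a b c 0 = a := by simp [exponent]
@[simp] lemma exponent_apply_one (a b c : ℕ) : exponent a b c 1 = b := by simp [exponent]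
@[simp] lemma exponent_apply_two (a b c : ℕ) : exponent a b c 2 = c := by simp [exponent]

lemma exponent_inj {a b c a' b' c' : ℕ} :
    exponent a b c = exponent a' b' c' ↔ a = a' ∧ b = b' ∧ c = c' := by
  refine ⟨fun h => ⟨?_, ?_, ?_⟩, fun ⟨ha, hb, hc⟩ => ha ▸ hb ▸ hc ▸ rfl⟩
  · simpa using DFunLike.congr_fun h 0
  · simpa using DFunLike.congr_fun h 1
  · simpa using DFunLike.congr_fun h 2

lemma exponent_sub_single (a b c : ℕ) (i : Fin 3) :
    exponent a b c - Finsupp.single i 1 =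
      exponent (a - if i = 0 then 1 else 0) (b - if i = 1 then 1 else 0)
        (c - if i = 2 then 1 else 0) := by
  ext j; fin_cases i <;> fin_cases j <;> simp

lemma X_pow_mul_X_pow_mul_X_pow_eq_monomial (a b c : ℕ) :
    (X 0 ^ a * X 1 ^ b * X 2 ^ c : MvPolynomial (Fin 3) (ZMod 2)) =
      monomial (exponent a b c) 1 := by
  simp only [X_pow_eq_monomial, monomial_mul, mul_one, exponent]

noncomputable def theta : MvPolynomial (Fin 3) (ZMod 2) →ₗ[ZMod 2] ZMod 2 :=
  lcoeff _ (exponent 0 1 2) + lcoeff _ (exponent 0 2 1) + lcoeff _ (exponent 1 0 2) +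
    lcoeff _ (exponent 1 2 0) + lcoeff _ (exponent 2 0 1) + lcoeff _ (exponent 2 1 0)

lemma theta_apply (p : MvPolynomial (Fin 3) (ZMod 2)) : theta p =
    coeff (exponent 0 1 2) p + coeff (exponent 0 2 1) p + coeff (exponent 1 0 2) p +
      coeff (exponent 1 2 0) p + coeff (exponent 2 0 1) p + coeff (exponent 2 1 0) p :=
  rfl

lemma theta_mul_eq_zero_of_mem {g : MvPolynomial (Fin 3) (ZMod 2)}
    (hg : g ∈ ({X 0 + X 1 + X 2, X 0 * X 1 + X 0 * X 2 + X 1 * X 2, X 0 * X 1 * X 2} :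
      Set (MvPolynomial (Fin 3) (ZMod 2)))) (p : MvPolynomial (Fin 3) (ZMod 2)) :
    theta (p * g) = 0 := by
  rcases hg with rfl | rfl | rfl <;>
    simp only [mul_add, ← mul_assoc, map_add, theta_apply, coeff_mul_X', Finsupp.mem_support_iff,
      exponent_sub_single] <;>
    simp <;> ring_nf <;> reduce_mod_char

lemma theta_eq_zero_of_mem_symIdeal {p : MvPolynomial (Fin 3) (ZMod 2)} (hp : p ∈ symIdeal) :
    theta p = 0 :=
  Ideal.map_eq_zero_of_mem_span theta.toAddMonoidHom (fun _ hg => theta_mul_eq_zero_of_mem hg) hp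

lemma theta_X_pow_mul_X_pow_mul_X_pow_eq_one {k1 k2 k3 : ℕ} (h : k1 + k2 + k3 = 3)
    (hk : ({k1, k2, k3} : Multiset ℕ) = {0, 1, 2}) :
    theta (X 0 ^ k1 * X 1 ^ k2 * X 2 ^ k3) = 1 := by
  rw [X_pow_mul_X_pow_mul_X_pow_eq_monomial]
  obtain ⟨hk1, hk2, hk3⟩ : k1 ≤ 3 ∧ k2 ≤ 3 ∧ k3 ≤ 3 := by omega
  interval_cases k1 <;> interval_cases k2 <;> interval_cases k3 <;> (try omega) <;>
    simp +decide [theta_apply, exponent_inj] at hk ⊢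

lemma mk_esymm_eq_zero :
    Ideal.Quotient.mk symIdeal (X 0) + Ideal.Quotient.mk symIdeal (X 1) +
        Ideal.Quotient.mk symIdeal (X 2) = 0 ∧
      Ideal.Quotient.mk symIdeal (X 0) * Ideal.Quotient.mk symIdeal (X 1) +
        Ideal.Quotient.mk symIdeal (X 0) * Ideal.Quotient.mk symIdeal (X 2) +
        Ideal.Quotient.mk symIdeal (X 1) * Ideal.Quotient.mk symIdeal (X 2) = 0 ∧
      Ideal.Quotient.mk symIdeal (X 0) * Ideal.Quotient.mk symIdeal (X 1) *
        Ideal.Quotient.mk symIdeal (X 2) = 0 := by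
  simp only [← map_add, ← map_mul, Ideal.Quotient.eq_zero_iff_mem]
  exact ⟨Ideal.subset_span (by simp), Ideal.subset_span (by simp), Ideal.subset_span (by simp)⟩

lemma mk_X_pow_mul_X_pow_mul_X_pow_eq_zero {k1 k2 k3 : ℕ} (h : k1 + k2 + k3 = 3)
    (hk : ({k1, k2, k3} : Multiset ℕ) ≠ {0, 1, 2}) :
    Ideal.Quotient.mk symIdeal (X 0 ^ k1 * X 1 ^ k2 * X 2 ^ k3) = 0 := by
  obtain ⟨h₁, h₂, h₃⟩ := mk_esymm_eq_zero
  have cubes := pow_three_eq_zero_of_esymm_eq_zero h₁ h₂ h₃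
  obtain ⟨hk1, hk2, hk3⟩ : k1 ≤ 3 ∧ k2 ≤ 3 ∧ k3 ≤ 3 := by omega
  interval_cases k1 <;> interval_cases k2 <;> interval_cases k3 <;> (try omega) <;>
    simp +decide [cubes, h₃] at hk ⊢

/-- Theta-foam evaluation: for `k1 + k2 + k3 = 3`, the image of
`u1^k1 · u2^k2 · u3^k3` in `R = F2[u1,u2,u3]/(e1,e2,e3)` is nonzero iff
`(k1,k2,k3)` is a permutation of `(0,1,2)`. -/
theorem stmt4 (k1 k2 k3 : ℕ) (h : k1 + k2 + k3 = 3) :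
    Ideal.Quotient.mk symIdeal (X 0 ^ k1 * X 1 ^ k2 * X 2 ^ k3) ≠ 0 ↔
      ({k1, k2, k3} : Multiset ℕ) = ({0, 1, 2} : Multiset ℕ) := by
  by_cases hk : ({k1, k2, k3} : Multiset ℕ) = {0, 1, 2}
  · refine iff_of_true (fun hzero => ?_) hk
    have := theta_eq_zero_of_mem_symIdeal (Ideal.Quotient.eq_zero_iff_mem.mp hzero)
    rw [theta_X_pow_mul_X_pow_mul_X_pow_eq_one h hk] at this
    exact one_ne_zero this
  · exact iff_of_false (not_not_intro (mk_X_pow_mul_X_pow_mul_X_pow_eq_zero h hk)) hk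
end

section
/- Let a and b be real quaternions satisfying a² = −1, b² = −1, and (a·b)² = −1. Then there exists a nonzero quaternion q such that q·a·q⁻¹ = i and q·b·q⁻¹ = j, where i and j are the standard imaginary quaternion units. -/
/-!
Since `a² = b² = (ab)² = -1`, the elements `a, b` anticommute, exactly like `i, j`. The
map `Q x = x - i x a - j x b - k x (ab)` then intertwines the two pairs: `Q x · a = i · Q x`
and `Q x · b = j · Q x`, so `q = Q x` works as soon as it is nonzero. It is nonzero for one
of `x = 1, i, j, k`, because `Q 1 - i Q i - j Q j - k Q k = 4`.
-/

section Ring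

variable {R : Type*} [Ring R] {i j a b : R}

theorem mul_comm_eq_neg_of_sq_eq_neg_one (ha : a ^ 2 = -1) (hb : b ^ 2 = -1)
    (hab : (a * b) ^ 2 = -1) : b * a = -(a * b) :=
  calc b * a = a ^ 2 * b * a * b ^ 2 := by rw [ha, hb]; noncomm_ring
    _ = a * (a * b) ^ 2 * b := by noncomm_ring
    _ = -(a * b) := by rw [hab]; noncomm_ring

def intertwiner (i j a b x : R) : R :=
  x - i * x * a - j * x * b - (i * j) * x * (a * b)

theorem intertwiner_swap (hij : j * i = -(i * j)) (hab : b * a = -(a * b)) (x : R) :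
    intertwiner j i b a x = intertwiner i j a b x := by
  rw [intertwiner, intertwiner, hij, hab]
  noncomm_ring

theorem intertwiner_mul_left (hi : i ^ 2 = -1) (ha : a ^ 2 = -1) (hab : b * a = -(a * b))
    (x : R) : intertwiner i j a b x * a = i * intertwiner i j a b x := by
  have haba : a * b * a = b := by
    rw [mul_assoc, hab, mul_neg, ← mul_assoc, ← sq, ha, neg_one_mul, neg_neg]
  calc intertwiner i j a b x * a
      = x * a - i * x * a ^ 2 - j * x * (b * a) - (i * j) * x * (a * b * a) := by
        rw [intertwiner]; noncomm_ring
    _ = i * x - i ^ 2 * x * a - (i * j) * x * b - i ^ 2 * j * x * (a * b) := by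
        rw [ha, hab, haba, hi]; noncomm_ring
    _ = i * intertwiner i j a b x := by rw [intertwiner]; noncomm_ring

theorem intertwiner_mul_right (hj : j ^ 2 = -1) (hij : j * i = -(i * j)) (hb : b ^ 2 = -1)
    (hab : b * a = -(a * b)) (x : R) :
    intertwiner i j a b x * b = j * intertwiner i j a b x := by
  have hba : a * b = -(b * a) := by rw [hab, neg_neg]
  rw [← intertwiner_swap hij hab]
  exact intertwiner_mul_left hj hb hba x

theorem intertwiner_sum_basis (hi : i ^ 2 = -1) (hj : j ^ 2 = -1) (hij : j * i = -(i * j))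
    (a b : R) :
    intertwiner i j a b 1 - i * intertwiner i j a b i - j * intertwiner i j a b j
      - (i * j) * intertwiner i j a b (i * j) = 4 := by
  rw [sq] at hi hj
  have hi' (x : R) : i * (i * x) = -x := by rw [← mul_assoc, hi, neg_one_mul]
  have hj' (x : R) : j * (j * x) = -x := by rw [← mul_assoc, hj, neg_one_mul]
  have hij' (x : R) : j * (i * x) = -(i * (j * x)) := by rw [← mul_assoc, hij, neg_mul, mul_assoc]
  simp only [intertwiner, mul_sub, mul_one, one_mul, mul_assoc, hi, hj, hij, hi', hj', hij',
    mul_neg, neg_mul, neg_neg]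
  abel_nf
  norm_num

theorem exists_intertwiner_ne_zero (hi : i ^ 2 = -1) (hj : j ^ 2 = -1) (hij : j * i = -(i * j))
    (h4 : (4 : R) ≠ 0) (a b : R) : ∃ x, intertwiner i j a b x ≠ 0 := by
  by_contra! h
  have := intertwiner_sum_basis hi hj hij a b
  simp only [h, mul_zero, sub_zero] at this
  exact h4 this.symm

end Ring

/-- If `a`, `b` are real quaternions with `a² = −1`, `b² = −1` and `(a·b)² = −1`,
then the pair `(a, b)` is conjugate to the standard pair `(i, j)`: there is a
nonzero quaternion `q` with `q·a·q⁻¹ = i` and `q·b·q⁻¹ = j`. -/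
theorem stmt8 (a b : Quaternion ℝ)
    (ha : a ^ 2 = -1) (hb : b ^ 2 = -1) (hab : (a * b) ^ 2 = -1) :
    ∃ q : Quaternion ℝ, q ≠ 0 ∧
      q * a * q⁻¹ = (⟨0, 1, 0, 0⟩ : Quaternion ℝ) ∧
      q * b * q⁻¹ = (⟨0, 0, 1, 0⟩ : Quaternion ℝ) := by
  let i : Quaternion ℝ := ⟨0, 1, 0, 0⟩
  let j : Quaternion ℝ := ⟨0, 0, 1, 0⟩
  -- `i` is unfolded only after `ext`: the literal carries the instances of `ℍ[ℝ,-1,0,-1]`,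
  -- not those of `Quaternion ℝ`, so the component lemmas must fire first.
  have hi : i ^ 2 = -1 := by
    ext <;> simp [sq] <;> simp [i, Quaternion.re_one, Quaternion.imI_one, Quaternion.imJ_one,
      Quaternion.imK_one]
  have hj : j ^ 2 = -1 := by
    ext <;> simp [sq] <;> simp [j, Quaternion.re_one, Quaternion.imI_one, Quaternion.imJ_one,
      Quaternion.imK_one]
  have hij : j * i = -(i * j) := by ext <;> simp <;> simp [i, j]
  have h4 : (4 : Quaternion ℝ) ≠ 0 := fun h =>
    four_ne_zero (congrArg QuaternionAlgebra.re h : (4 : ℝ) = 0)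
  have hba := mul_comm_eq_neg_of_sq_eq_neg_one ha hb hab
  obtain ⟨x, hx⟩ := exists_intertwiner_ne_zero hi hj hij h4 a b
  refine ⟨_, hx, ?_, ?_⟩
  · rw [intertwiner_mul_left hi ha hba, mul_assoc, mul_inv_cancel₀ hx, mul_one]
  · rw [intertwiner_mul_right hj hij hb hba, mul_assoc, mul_inv_cancel₀ hx, mul_one]
end

section
/- Let a and b be real quaternions satisfying a² = −1 and b² = −1 (so a and b are purely imaginary unit quaternions, corresponding to rotations of ℝ³ by angle π). Then the commutator a·b·a⁻¹·b⁻¹ has zero real part if and only if (re(a·b))² = 1/2; equivalently, the commutator of the two corresponding rotations has order 2 in SO(3) exactly when the axes of the rotations make an angle of π/4 or 3π/4. -/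
/-! Since `a² = b² = −1`, the inverses are `a⁻¹ = −a` and `b⁻¹ = −b`, so the commutator is
`(a·b)²`. Every quaternion satisfies `re (q²) = 2 (re q)² − |q|²`, and `|a·b| = |a|·|b| = 1`,
so the real part of the commutator is `2 (re (a·b))² − 1`. -/

theorem inv_eq_neg_of_sq_eq_neg_one {K : Type*} [DivisionRing K] {a : K} (ha : a ^ 2 = -1) :
    a⁻¹ = -a :=
  inv_eq_of_mul_eq_one_right <| by rw [mul_neg, ← sq, ha, neg_neg]

theorem mul_mul_inv_mul_inv_eq_sq_of_sq_eq_neg_one {K : Type*} [DivisionRing K] {a b : K}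
    (ha : a ^ 2 = -1) (hb : b ^ 2 = -1) : a * b * a⁻¹ * b⁻¹ = (a * b) ^ 2 := by
  rw [inv_eq_neg_of_sq_eq_neg_one ha, inv_eq_neg_of_sq_eq_neg_one hb, sq]
  noncomm_ring

namespace Quaternion

theorem re_sq {R : Type*} [CommRing R] (q : ℍ[R]) : (q ^ 2).re = 2 * q.re ^ 2 - normSq q := by
  rw [sq, re_mul, normSq_def']
  ring

theorem normSq_eq_one_of_sq_eq_neg_one {R : Type*} [CommRing R] [LinearOrder R]
    [IsStrictOrderedRing R] {a : ℍ[R]} (ha : a ^ 2 = -1) : normSq a = 1 := by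
  have h : normSq a ^ 2 = 1 := by rw [← map_pow, ha, normSq_neg, map_one]
  exact (pow_eq_one_iff_of_nonneg normSq_nonneg two_ne_zero).mp h

end Quaternion

/-- For purely imaginary unit quaternions `a`, `b` (i.e. `a² = −1`, `b² = −1`,
corresponding to rotations of `ℝ³` by `π`), the commutator `a·b·a⁻¹·b⁻¹` has zero
real part (i.e. the commutator of the two rotations has order 2 in `SO(3)`) if and
only if `(re (a·b))² = 1/2`, i.e. exactly when the axes of the two rotations make an
angle of `π/4` or `3π/4`. -/
theorem stmt10 (a b : Quaternion ℝ) (ha : a ^ 2 = -1) (hb : b ^ 2 = -1) :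
    (a * b * a⁻¹ * b⁻¹).re = 0 ↔ ((a * b).re) ^ 2 = 1 / 2 := by
  have hab : Quaternion.normSq (a * b) = 1 := by
    rw [map_mul, Quaternion.normSq_eq_one_of_sq_eq_neg_one ha,
      Quaternion.normSq_eq_one_of_sq_eq_neg_one hb, one_mul]
  rw [mul_mul_inv_mul_inv_eq_sq_of_sq_eq_neg_one ha hb, Quaternion.re_sq, hab]
  constructor <;> intro h <;> linarith
end

section
/- Fix n ∈ ℕ and let G = (ℤ/2)^n with generators x_1,…,x_n. For each subset A ⊆ {1,…,n} set ξ_A = Σ_{g ∈ G_A} g in the group algebra F2[G], where G_A is the subgroup generated by {x_i : i ∈ A}. Then the family (ξ_A), indexed by all 2^n subsets A ⊆ {1,…,n}, is a basis of F2[G] as an F2-vector space. -/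
/-- The group `G = (ℤ/2)ⁿ`, written multiplicatively. -/
abbrev GrpG (n : ℕ) : Type := Multiplicative (Fin n → ZMod 2)

/-- The `i`-th generator `x_i` of `G = (ℤ/2)ⁿ`. -/
def xgen {n : ℕ} (i : Fin n) : GrpG n := Multiplicative.ofAdd (Pi.single i 1)

/-- The subgroup `G_A ≤ G` generated by `{x_i : i ∈ A}`. -/
def GA {n : ℕ} (A : Finset (Fin n)) : Subgroup (GrpG n) :=
  Subgroup.closure (xgen '' (A : Set (Fin n)))

open scoped Classical in
/-- The element `ξ_A = ∑_{g ∈ G_A} g` of the group algebra `F2[G]`. -/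
noncomputable def xiA {n : ℕ} (A : Finset (Fin n)) : MonoidAlgebra (ZMod 2) (GrpG n) :=
  ∑ g ∈ ((GA A : Set (GrpG n)).toFinset), MonoidAlgebra.of (ZMod 2) (GrpG n) g

/-!
Writing `e_B = ∏_{i ∈ B} x_i`, the group `G_A` is `{e_B : B ⊆ A}`, so `ξ_A = ∑_{B ⊆ A} e_B` is the
zeta transform of the standard basis `(e_B)` over the subset lattice. Its inverse is the Möbius
transform, whose coefficients `(-1)^{|A \ B|}` are all `1` in characteristic two: the zeta
transform is an involution, hence an automorphism carrying the standard basis to `(ξ_A)`.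
-/

open Finset

section SubsetLattice

variable {α M : Type*} [DecidableEq α]

theorem Finset.sum_powerset_sum_powerset_of_zmod_two [AddCommMonoid M] [Module (ZMod 2) M]
    (A : Finset α) (v : Finset α → M) :
    ∑ B ∈ A.powerset, ∑ C ∈ B.powerset, v C = v A := by
  have two_pow_nsmul : ∀ k ≠ 0, ∀ x : M, 2 ^ k • x = 0 := fun k hk x => by
    rw [← Nat.cast_smul_eq_nsmul (ZMod 2), Nat.cast_pow, ZMod.natCast_self,
      zero_pow hk, zero_smul]
  calc ∑ B ∈ A.powerset, ∑ C ∈ B.powerset, v C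
      = ∑ C ∈ A.powerset, ∑ _B ∈ Icc C A, v C :=
        sum_comm' fun B C => by
          simp only [mem_powerset, mem_Icc]
          exact ⟨fun h => ⟨⟨h.2, h.1⟩, h.2.trans h.1⟩, fun h => ⟨h.1.2, h.1.1⟩⟩
    _ = ∑ C ∈ A.powerset, 2 ^ (#A - #C) • v C :=
        sum_congr rfl fun C hC => by rw [sum_const, card_Icc_finset (mem_powerset.1 hC)]
    _ = v A := by
        rw [sum_eq_single_of_mem A (mem_powerset_self A), Nat.sub_self, pow_zero, one_smul]
        intro C hC hCA
        exact two_pow_nsmul _ (Nat.sub_ne_zero_of_lt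
          (card_lt_card (ssubset_of_subset_of_ne (mem_powerset.1 hC) hCA))) _

theorem Module.Basis.exists_apply_eq_sum_powerset [AddCommMonoid M] [Module (ZMod 2) M]
    (b : Module.Basis (Finset α) (ZMod 2) M) :
    ∃ b' : Module.Basis (Finset α) (ZMod 2) M, ∀ A, b' A = ∑ B ∈ A.powerset, b B := by
  set T : M →ₗ[ZMod 2] M := b.constr ℕ fun A => ∑ B ∈ A.powerset, b B
  have hT : ∀ A, T (b A) = ∑ B ∈ A.powerset, b B := b.constr_basis ℕ _
  have hTT : T ∘ₗ T = LinearMap.id := b.ext fun A => by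
    simp only [LinearMap.comp_apply, hT, map_sum, LinearMap.id_apply,
      sum_powerset_sum_powerset_of_zmod_two]
  refine ⟨b.map (LinearEquiv.ofInvolutive T (LinearMap.congr_fun hTT ·)), fun A => ?_⟩
  rw [Module.Basis.map_apply]
  exact hT A

end SubsetLattice

section GroupAlgebra

lemma ZMod.two_eq_zero_or_eq_one (a : ZMod 2) : a = 0 ∨ a = 1 := by
  revert a; decide

def indicatorEquiv (n : ℕ) : Finset (Fin n) ≃ GrpG n where
  toFun B := Multiplicative.ofAdd fun i => if i ∈ B then 1 else 0
  invFun g := univ.filter fun i => g.toAdd i ≠ 0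
  left_inv B := by ext i; by_cases h : i ∈ B <;> simp [h]
  right_inv g := by
    ext i
    rcases ZMod.two_eq_zero_or_eq_one (g.toAdd i) with h | h <;> simp [h]

variable {n : ℕ}

lemma indicatorEquiv_eq_prod_xgen (B : Finset (Fin n)) :
    indicatorEquiv n B = ∏ i ∈ B, xgen i := by
  ext j
  simp [indicatorEquiv, xgen, toAdd_prod, Pi.single_apply]

lemma toAdd_eq_zero_of_mem_GA {A : Finset (Fin n)} {g : GrpG n} (hg : g ∈ GA A) {i : Fin n}
    (hi : i ∉ A) : g.toAdd i = 0 := by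
  induction hg using Subgroup.closure_induction with
  | mem x hx =>
    obtain ⟨j, hj, rfl⟩ := hx
    have : i ≠ j := fun h => hi (h ▸ hj)
    simp [xgen, this]
  | one => rfl
  | mul x y _ _ hx hy => simp [hx, hy]
  | inv x _ hx => simp [hx]

lemma indicatorEquiv_mem_GA_iff {A B : Finset (Fin n)} :
    indicatorEquiv n B ∈ GA A ↔ B ⊆ A := by
  refine ⟨fun h i hiB => ?_, fun hBA => ?_⟩
  · by_contra hiA
    simpa [indicatorEquiv, hiB] using toAdd_eq_zero_of_mem_GA h hiA
  · rw [indicatorEquiv_eq_prod_xgen]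
    exact Subgroup.prod_mem _ fun i hi => Subgroup.subset_closure ⟨i, hBA hi, rfl⟩

lemma xiA_eq_sum_powerset (A : Finset (Fin n)) :
    xiA A = ∑ B ∈ A.powerset, MonoidAlgebra.of (ZMod 2) (GrpG n) (indicatorEquiv n B) := by
  classical
  have : (GA A : Set (GrpG n)).toFinset = A.powerset.map (indicatorEquiv n).toEmbedding := by
    ext g
    rw [← (indicatorEquiv n).apply_symm_apply g]
    simp [-Equiv.apply_symm_apply, indicatorEquiv_mem_GA_iff]
  rw [xiA, this, sum_map]
  rfl

end GroupAlgebra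

/-- The family `(ξ_A)`, indexed by all `2ⁿ` subsets `A ⊆ {1,…,n}`, is a basis of the
group algebra `F2[(ℤ/2)ⁿ]` as an `F2`-vector space. -/
theorem stmt11 (n : ℕ) :
    ∃ b : Module.Basis (Finset (Fin n)) (ZMod 2) (MonoidAlgebra (ZMod 2) (GrpG n)),
      ∀ A : Finset (Fin n), b A = xiA A := by
  obtain ⟨b, hb⟩ := ((MonoidAlgebra.basis (GrpG n) (ZMod 2)).reindex
    (indicatorEquiv n).symm).exists_apply_eq_sum_powerset
  refine ⟨b, fun A => ?_⟩
  rw [hb, xiA_eq_sum_powerset]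
  simp
end

section
/- Fix n ∈ ℕ and let G = (ℤ/2)^n with generators x_1,…,x_n; for I ⊆ {1,…,n} let x_I = Π_{i ∈ I} x_i ∈ G, and for A ⊆ {1,…,n} let ξ_A = Σ_{g ∈ G_A} g in F2[G], where G_A is the subgroup generated by {x_i : i ∈ A}. Then for all subsets I and A of {1,…,n}, the identity x_I · ξ_A = Σ_{A ⊆ A' ⊆ A ∪ I} ξ_{A'} holds in F2[G], the sum being over all subsets A' with A ⊆ A' ⊆ A ∪ I. -/
/-! Compare coefficients at `h ∈ G`. The support identifies `G` with the subsets of `Fin n` under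
symmetric difference, and `G_A` is then the set of elements supported in `A`. So the coefficient
of `h` in `x_I ξ_A` is `1` iff `I ∆ supp h ⊆ A`, i.e. iff `A ∪ supp h = A ∪ I`, while on the right it
counts the `A'` with `A ∪ supp h ⊆ A' ⊆ A ∪ I`: a power of two, odd exactly when the interval is a
single point. -/

open Finset

section IntervalParity

variable {α : Type*} [DecidableEq α]

theorem Finset.card_Icc_cast_zmod_two (s t : Finset α) :
    (#(Icc s t) : ZMod 2) = if s = t then 1 else 0 := by
  split_ifs with hst
  · simp [hst]
  by_cases hsub : s ⊆ t
  · have hk : #t - #s ≠ 0 := by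
      have := card_lt_card (lt_of_le_of_ne hsub hst)
      omega
    simp [card_Icc_finset hsub, hk, CharTwo.two_eq_zero]
  · rw [Icc_eq_empty hsub, card_empty, Nat.cast_zero]

theorem Finset.symmDiff_subset_iff_union_eq (s t u : Finset α) :
    symmDiff s t ⊆ u ↔ u ∪ s = u ∪ t := by
  simp only [subset_iff, mem_symmDiff, Finset.ext_iff, mem_union]
  grind

end IntervalParity

namespace GrpG

variable {n : ℕ}

def supp (g : GrpG n) : Finset (Fin n) := univ.filter fun i => Multiplicative.toAdd g i ≠ 0

theorem mem_supp {g : GrpG n} {i : Fin n} : i ∈ supp g ↔ Multiplicative.toAdd g i ≠ 0 := by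
  simp [supp]

theorem supp_one : supp (1 : GrpG n) = ∅ := by
  ext i; simp [mem_supp]

theorem supp_mul (g h : GrpG n) : supp (g * h) = symmDiff (supp g) (supp h) := by
  have key : ∀ a b : ZMod 2, a + b ≠ 0 ↔ a ≠ 0 ∧ b = 0 ∨ b ≠ 0 ∧ a = 0 := by decide
  ext i
  simp only [mem_supp, mem_symmDiff, toAdd_mul, Pi.add_apply, key, not_not]

theorem supp_inv (g : GrpG n) : supp g⁻¹ = supp g := by
  ext i; simp [mem_supp]

theorem toAdd_prod_xgen (I : Finset (Fin n)) (j : Fin n) :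
    Multiplicative.toAdd (∏ i ∈ I, xgen i) j = if j ∈ I then 1 else 0 := by
  simp [xgen, toAdd_prod, Finset.sum_apply, Pi.single_apply]

theorem supp_prod_xgen (I : Finset (Fin n)) : supp (∏ i ∈ I, xgen i) = I := by
  ext j; by_cases hj : j ∈ I <;> simp [mem_supp, toAdd_prod_xgen, hj]

theorem prod_xgen_supp (g : GrpG n) : ∏ i ∈ supp g, xgen i = g := by
  have two_valued : ∀ a : ZMod 2, a ≠ 0 → a = 1 := by decide
  apply Multiplicative.toAdd.injective
  funext j
  rw [toAdd_prod_xgen]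
  split_ifs with hj
  · exact (two_valued _ (mem_supp.mp hj)).symm
  · exact (not_not.mp (mt mem_supp.mpr hj)).symm

theorem mem_GA_iff_supp_subset (A : Finset (Fin n)) (g : GrpG n) :
    g ∈ GA A ↔ supp g ⊆ A := by
  refine ⟨fun hg => ?_, fun hg => ?_⟩
  · induction hg using Subgroup.closure_induction with
    | mem x hx =>
      obtain ⟨i, hi, rfl⟩ := hx
      have supp_xgen := supp_prod_xgen {i}
      rw [prod_singleton] at supp_xgen
      simpa [supp_xgen] using hi
    | one => simp [supp_one]
    | mul x y _ _ hx hy =>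
      exact (supp_mul x y).trans_subset (symmDiff_le_sup.trans (sup_le hx hy))
    | inv x _ hx => rwa [supp_inv]
  · rw [← prod_xgen_supp g]
    exact prod_mem fun i hi => Subgroup.subset_closure ⟨i, hg hi, rfl⟩

theorem coeff_xiA (A : Finset (Fin n)) (h : GrpG n) :
    (xiA A).coeff h = if supp h ⊆ A then 1 else 0 := by
  classical
  simp only [xiA, MonoidAlgebra.coeff_sum, Finset.sum_apply', MonoidAlgebra.of_apply,
    MonoidAlgebra.coeff_single, Finsupp.single_apply, sum_ite_eq', Set.mem_toFinset,
    SetLike.mem_coe, mem_GA_iff_supp_subset]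

end GrpG

open GrpG

/-- The identity `x_I · ξ_A = ∑_{A ⊆ A' ⊆ A ∪ I} ξ_{A'}` in `F2[(ℤ/2)ⁿ]`, where
`x_I = ∏_{i ∈ I} x_i`. -/
theorem stmt12 {n : ℕ} (I A : Finset (Fin n)) :
    MonoidAlgebra.of (ZMod 2) (GrpG n) (∏ i ∈ I, xgen i) * xiA A =
      ∑ A' ∈ Finset.Icc A (A ∪ I), xiA A' := by
  classical
  ext h
  have subsets_containing_supp :
      {A' ∈ Icc A (A ∪ I) | supp h ⊆ A'} = Icc (A ∪ supp h) (A ∪ I) := by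
    ext A'
    simp only [mem_filter, mem_Icc, union_subset_iff]
    tauto
  rw [MonoidAlgebra.of_apply, MonoidAlgebra.coeff_single_mul_apply, one_mul, coeff_xiA,
    MonoidAlgebra.coeff_sum, Finset.sum_apply']
  simp only [coeff_xiA]
  rw [sum_boole, subsets_containing_supp, card_Icc_cast_zmod_two, supp_mul, supp_inv,
    supp_prod_xgen]
  exact if_congr ((symmDiff_subset_iff_union_eq _ _ _).trans eq_comm) rfl rfl
end

section
/- Fix n ∈ ℕ, let G = (ℤ/2)^n, let ε : F2[G] → F2 be the augmentation homomorphism and 𝓘 = ker ε the augmentation ideal, with the convention 𝓘^0 = F2[G]. Then for every m ≥ 0, the dimension over F2 of the quotient 𝓘^m / 𝓘^{m+1} equals the binomial coefficient C(n, m). -/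
/-- The augmentation homomorphism `ε : F2[G] → F2` sending every group element to `1`. -/
noncomputable def aug (n : ℕ) : MonoidAlgebra (ZMod 2) (GrpG n) →ₐ[ZMod 2] ZMod 2 :=
  MonoidAlgebra.lift (ZMod 2) (ZMod 2) (GrpG n) 1

/-- The augmentation ideal `𝓘 = ker ε` of the group algebra `F2[(ℤ/2)ⁿ]`
(with the convention `𝓘^0 = F2[G]`, which is automatic for ideal powers). -/
noncomputable def augIdeal (n : ℕ) : Ideal (MonoidAlgebra (ZMod 2) (GrpG n)) :=
  RingHom.ker (aug n)

/-!
Write `xᵢ = gᵢ - 1` for the standard generators `gᵢ` of `G`. Since `gᵢ² = 1` and `2 = 0`, we get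
`xᵢ² = 0`, and expanding `g_v = ∏_{vᵢ = 1} (1 + xᵢ)` shows that the `2ⁿ` square-free monomials
`x_S = ∏_{i ∈ S} xᵢ` span, hence form a basis of, `F2[G]`. The augmentation ideal is spanned by the
`x_S` with `S ≠ ∅`, and as `x_S x_T` is either `x_{S ∪ T}` or `0`, the power `𝓘^m` is spanned by the
`x_S` with `|S| ≥ m`. So `𝓘^m / 𝓘^{m+1}` has a basis indexed by the `m`-element subsets of `Fin n`.
-/

open Finset Submodule MonoidAlgebra Multiplicative

namespace Module.Basis

variable {K V ι : Type*} [DivisionRing K] [AddCommGroup V] [Module K V]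

theorem finrank_span_image_finset (b : Basis ι K V) (s : Finset ι) :
    finrank K (span K (b '' s)) = s.card := by
  rw [Set.image_eq_range]
  exact (finrank_span_eq_card (b.linearIndependent.comp _ Subtype.val_injective)).trans (by simp)

theorem finrank_span_image_quotient [DecidableEq ι] (b : Basis ι K V) {s t : Finset ι}
    (hts : t ⊆ s) :
    finrank K (span K (b '' s) ⧸ comap (span K (b '' s)).subtype (span K (b '' t))) =
      (s \ t).card := by
  have : Module.Finite K (span K (b '' s)) :=
    Module.Finite.span_of_finite K (s.finite_toSet.image b)
  have hle : span K (b '' t) ≤ span K (b '' s) := span_mono (Set.image_mono (by simpa using hts))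
  rw [Submodule.finrank_quotient, (comapSubtypeEquivOfLe hle).finrank_eq,
    finrank_span_image_finset, finrank_span_image_finset, card_sdiff_of_subset hts]

end Module.Basis

theorem ZMod.pi_two_eq_sum_single {ι : Type*} [Fintype ι] [DecidableEq ι] (v : ι → ZMod 2) :
    v = ∑ i ∈ univ.filter (v · ≠ 0), Pi.single i 1 := by
  funext j
  simp only [Finset.sum_apply, Pi.single_apply, sum_ite_eq, mem_filter, mem_univ, true_and]
  exact (by decide : ∀ a : ZMod 2, a = if a ≠ 0 then 1 else 0) _

abbrev GrpAlg (n : ℕ) : Type := MonoidAlgebra (ZMod 2) (GrpG n)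

namespace GrpAlg

variable {n : ℕ}

noncomputable def genSubOne (i : Fin n) : GrpAlg n :=
  of (ZMod 2) (GrpG n) (ofAdd (Pi.single i 1)) - 1

noncomputable def monomial (S : Finset (Fin n)) : GrpAlg n := ∏ i ∈ S, genSubOne i

theorem two_eq_zero : (2 : GrpAlg n) = 0 := by
  rw [← map_ofNat (algebraMap (ZMod 2) (GrpAlg n)) 2, show (2 : ZMod 2) = 0 from rfl, map_zero]

theorem of_ofAdd_mul_self (v : Fin n → ZMod 2) :
    of (ZMod 2) (GrpG n) (ofAdd v) * of (ZMod 2) (GrpG n) (ofAdd v) = 1 := by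
  rw [← map_mul, ← ofAdd_add, show v + v = 0 from funext fun i => CharTwo.add_self_eq_zero (v i),
    ofAdd_zero, map_one]

theorem genSubOne_mul_self (i : Fin n) : genSubOne i * genSubOne i = 0 := by
  unfold genSubOne
  linear_combination (of_ofAdd_mul_self (Pi.single i 1)) +
    (1 - of (ZMod 2) (GrpG n) (ofAdd (Pi.single i 1))) * two_eq_zero

theorem genSubOne_mem_augIdeal (i : Fin n) : genSubOne i ∈ augIdeal n := by
  simp [augIdeal, genSubOne, aug]

theorem monomial_mem_augIdeal {S : Finset (Fin n)} (hS : S.Nonempty) : monomial S ∈ augIdeal n := by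
  obtain ⟨i, hi⟩ := hS
  rw [monomial, ← mul_prod_erase S genSubOne hi]
  exact Ideal.mul_mem_right _ _ (genSubOne_mem_augIdeal i)

theorem monomial_mul_monomial_of_not_disjoint {S T : Finset (Fin n)} (h : ¬Disjoint S T) :
    monomial S * monomial T = 0 := by
  obtain ⟨i, hiS, hiT⟩ := not_disjoint_iff.mp h
  rw [monomial, monomial, ← mul_prod_erase S genSubOne hiS, ← mul_prod_erase T genSubOne hiT,
    mul_mul_mul_comm, genSubOne_mul_self, zero_mul]

theorem of_ofAdd_eq_sum_monomial (v : Fin n → ZMod 2) :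
    of (ZMod 2) (GrpG n) (ofAdd v) = ∑ T ∈ (univ.filter (v · ≠ 0)).powerset, monomial T := by
  conv_lhs => rw [ZMod.pi_two_eq_sum_single v, ofAdd_sum, map_prod]
  simp only [monomial, ← prod_one_add, genSubOne, add_sub_cancel]

theorem span_range_monomial : span (ZMod 2) (Set.range (monomial (n := n))) = ⊤ := by
  refine eq_top_iff.mpr ((MonoidAlgebra.basis (GrpG n) (ZMod 2)).span_eq.ge.trans (span_le.mpr ?_))
  rintro _ ⟨g, rfl⟩
  rw [MonoidAlgebra.basis_apply, ← of_apply, ← ofAdd_toAdd g, of_ofAdd_eq_sum_monomial]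
  exact sum_mem fun T _ => subset_span ⟨T, rfl⟩

noncomputable def monomialBasis : Module.Basis (Finset (Fin n)) (ZMod 2) (GrpAlg n) :=
  basisOfTopLeSpanOfCardEqFinrank monomial span_range_monomial.ge <| by
    rw [Module.finrank_eq_card_basis (MonoidAlgebra.basis (GrpG n) (ZMod 2))]
    simp

theorem coe_monomialBasis : ⇑(monomialBasis (n := n)) = monomial :=
  coe_basisOfTopLeSpanOfCardEqFinrank ..

noncomputable def monomialFiltration (n m : ℕ) : Submodule (ZMod 2) (GrpAlg n) :=
  span (ZMod 2) (monomialBasis '' ↑(univ.filter fun S : Finset (Fin n) => m ≤ S.card))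

theorem monomial_mem_monomialFiltration {m : ℕ} {S : Finset (Fin n)} (h : m ≤ S.card) :
    monomial S ∈ monomialFiltration n m :=
  subset_span ⟨S, by simpa using h, by rw [coe_monomialBasis]⟩

theorem monomialFiltration_zero : monomialFiltration n 0 = ⊤ := by
  simp [monomialFiltration, monomialBasis.span_eq]

theorem monomialFiltration_one_le :
    monomialFiltration n 1 ≤ (augIdeal n).restrictScalars (ZMod 2) := by
  refine span_le.mpr ?_
  rintro _ ⟨S, hS, rfl⟩
  rw [coe_monomialBasis]
  exact monomial_mem_augIdeal (by simpa [Finset.one_le_card] using hS)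

theorem restrictScalars_augIdeal :
    (augIdeal n).restrictScalars (ZMod 2) = monomialFiltration n 1 := by
  refine le_antisymm (fun y hy => ?_) monomialFiltration_one_le
  have hsplit : monomialFiltration n 0 = (ZMod 2) ∙ monomial ∅ ⊔ monomialFiltration n 1 := by
    rw [monomialFiltration, monomialFiltration, ← span_insert, coe_monomialBasis,
      ← Set.image_insert_eq]
    congr 2
    ext S
    simp [Finset.one_le_card, Finset.nonempty_iff_ne_empty, em]
  obtain ⟨_, hc, z, hz, rfl⟩ :=
    mem_sup.mp (hsplit ▸ monomialFiltration_zero ▸ mem_top (x := y))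
  obtain ⟨c, rfl⟩ := mem_span_singleton.mp hc
  have hz' : aug n z = 0 := monomialFiltration_one_le hz
  have hy' : aug n (c • monomial ∅ + z) = 0 := hy
  have : c = 0 := by simpa [monomial, hz'] using hy'
  simpa [this] using hz

theorem monomialFiltration_succ (m : ℕ) :
    monomialFiltration n (m + 1) = monomialFiltration n 1 * monomialFiltration n m := by
  apply le_antisymm
  · refine span_le.mpr ?_
    rintro _ ⟨S, hS, rfl⟩
    simp only [coe_filter, mem_univ, true_and, Set.mem_ofPred_eq] at hS
    obtain ⟨i, hi⟩ := card_pos.mp (by omega : 0 < S.card)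
    have hsplit : monomial S = monomial {i} * monomial (S.erase i) := by
      rw [monomial, monomial, monomial, prod_singleton, mul_prod_erase S genSubOne hi]
    rw [coe_monomialBasis, hsplit]
    exact mul_mem_mul (monomial_mem_monomialFiltration (by simp))
      (monomial_mem_monomialFiltration (by rw [card_erase_of_mem hi]; omega))
  · rw [monomialFiltration, monomialFiltration, span_mul_span, span_le]
    rintro _ ⟨_, ⟨S, hS, rfl⟩, _, ⟨T, hT, rfl⟩, rfl⟩
    simp only [coe_filter, mem_univ, true_and, Set.mem_ofPred_eq] at hS hT
    simp only [coe_monomialBasis]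
    by_cases h : Disjoint S T
    · rw [monomial, monomial, ← prod_union h]
      exact monomial_mem_monomialFiltration (by rw [card_union_of_disjoint h]; omega)
    · rw [monomial_mul_monomial_of_not_disjoint h]
      exact zero_mem _

theorem restrictScalars_augIdeal_pow (m : ℕ) :
    (augIdeal n ^ m).restrictScalars (ZMod 2) = monomialFiltration n m := by
  induction m with
  | zero => rw [pow_zero, Ideal.one_eq_top, restrictScalars_top, monomialFiltration_zero]
  | succ m ih =>
    rw [pow_succ', restrictScalars_mul, ih, restrictScalars_augIdeal, monomialFiltration_succ m]

end GrpAlg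

/-- For every `m ≥ 0`, the `F2`-dimension of the associated graded piece
`𝓘^m / 𝓘^{m+1}` of the augmentation filtration of `F2[(ℤ/2)ⁿ]` is `n choose m`. -/
theorem stmt14 (n m : ℕ) :
    Module.finrank (ZMod 2)
      ((Submodule.restrictScalars (ZMod 2) (augIdeal n ^ m)) ⧸
        (Submodule.comap (Submodule.restrictScalars (ZMod 2) (augIdeal n ^ m)).subtype
          (Submodule.restrictScalars (ZMod 2) (augIdeal n ^ (m + 1))))) =
      Nat.choose n m := by
  have hgraded : (univ.filter fun S : Finset (Fin n) => m ≤ S.card) \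
      univ.filter (fun S => m + 1 ≤ S.card) = powersetCard m univ := by
    ext S
    simp only [mem_sdiff, mem_filter, mem_univ, true_and, mem_powersetCard, subset_univ]
    omega
  rw [GrpAlg.restrictScalars_augIdeal_pow, GrpAlg.restrictScalars_augIdeal_pow,
    GrpAlg.monomialFiltration, GrpAlg.monomialFiltration,
    GrpAlg.monomialBasis.finrank_span_image_quotient (monotone_filter_right _ fun S h => by omega),
    hgraded, card_powersetCard, card_univ, Fintype.card_fin]
end

section
/- Let G be a finite simple graph in which every vertex is incident to exactly three edges (a cubic graph), and suppose G is bipartite (2-colorable). Let η be a function from the edges of G to ℤ/2 such that for every vertex v, the sum of η over the three edges incident to v is 0. Then the number of vertices of G that are incident to at least one edge e with η(e) = 1 is even. -/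
/-- Every edge of a simple graph has exactly two endpoints. -/
lemma stmt18_card_two {V : Type} [Fintype V] [DecidableEq V] (G : SimpleGraph V)
    (e : Sym2 V) (he : e ∈ G.edgeSet) :
    (Finset.univ.filter (fun v => v ∈ e)).card = 2 := by
  induction e using Sym2.ind with
  | _ a b =>
    rw [SimpleGraph.mem_edgeSet] at he
    have hab : a ≠ b := he.ne
    have h : Finset.univ.filter (fun v => v ∈ s(a, b)) = {a, b} := by
      ext v
      simp [Sym2.mem_iff]
    rw [h, Finset.card_insert_of_notMem (by simp [hab]), Finset.card_singleton]

/-- Every edge has exactly one endpoint of color 0 under a 2-coloring. -/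
lemma stmt18_card_one {V : Type} [Fintype V] [DecidableEq V] (G : SimpleGraph V)
    (C : G.Coloring (Fin 2)) (e : Sym2 V) (he : e ∈ G.edgeSet) :
    (Finset.univ.filter (fun v => v ∈ e ∧ C v = 0)).card = 1 := by
  induction e using Sym2.ind with
  | _ a b =>
    rw [SimpleGraph.mem_edgeSet] at he
    have hne : C a ≠ C b := C.valid he
    have h2 : ∀ x : Fin 2, x = 0 ∨ x = 1 := by decide
    rcases h2 (C a) with ha | ha
    · have hb : C b ≠ 0 := fun h => hne (ha.trans h.symm)
      have h : Finset.univ.filter (fun v => v ∈ s(a, b) ∧ C v = 0) = {a} := by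
        ext v
        simp only [Finset.mem_filter, Finset.mem_univ, true_and, Sym2.mem_iff,
          Finset.mem_singleton]
        constructor
        · rintro ⟨hv | rfl, hc⟩
          · exact hv
          · exact absurd hc hb
        · rintro rfl; exact ⟨Or.inl rfl, ha⟩
      rw [h, Finset.card_singleton]
    · have hb : C b = 0 := by
        rcases h2 (C b) with h | h
        · exact h
        · exact absurd (ha.trans h.symm) hne
      have h : Finset.univ.filter (fun v => v ∈ s(a, b) ∧ C v = 0) = {b} := by
        ext v
        simp only [Finset.mem_filter, Finset.mem_univ, true_and, Sym2.mem_iff,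
          Finset.mem_singleton]
        constructor
        · rintro ⟨rfl | hv, hc⟩
          · rw [ha] at hc; exact absurd hc (by decide)
          · exact hv
        · rintro rfl; exact ⟨Or.inr rfl, hb⟩
      rw [h, Finset.card_singleton]

/-- Let `G` be a cubic bipartite graph, and let `η` be a `ℤ/2`-valued function on the
edges of `G` whose sum over the three edges at each vertex vanishes. Then the number of
vertices incident to at least one edge `e` with `η e = 1` is even. -/
theorem stmt18 {V : Type} [Fintype V] [DecidableEq V]
    (G : SimpleGraph V) [DecidableRel G.Adj]
    (hcubic : ∀ v : V, G.degree v = 3)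
    (hbip : G.Colorable 2)
    (η : G.edgeSet → ZMod 2)
    (hsum : ∀ v : V,
      ∑ e ∈ Finset.univ.filter (fun e : G.edgeSet => v ∈ (e : Sym2 V)), η e = 0) :
    Even (Nat.card {v : V // ∃ e : G.edgeSet, v ∈ (e : Sym2 V) ∧ η e = 1}) := by
  classical
  obtain ⟨C⟩ := hbip
  set S : Finset G.edgeSet := Finset.univ.filter (fun e => η e = 1) with hS
  set d : V → ℕ := fun v =>
    (Finset.univ.filter (fun e : G.edgeSet => v ∈ (e : Sym2 V) ∧ η e = 1)).card with hd
  -- rewrite d in terms of S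
  have hdS : ∀ v, d v = (S.filter (fun e : G.edgeSet => v ∈ (e : Sym2 V))).card := by
    intro v
    simp only [hd]
    rw [hS, Finset.filter_filter]
    exact congrArg Finset.card (Finset.filter_congr fun e _ => by simp [and_comm])
  have htwo : ∀ x : ZMod 2, x = 0 ∨ x = 1 := by decide
  -- each d v is even
  have hev : ∀ v, Even (d v) := by
    intro v
    have hfilt : (Finset.univ.filter (fun e : G.edgeSet => v ∈ (e : Sym2 V) ∧ η e = 1))
        = (Finset.univ.filter (fun e : G.edgeSet => v ∈ (e : Sym2 V))).filter
            (fun e => η e = 1) := by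
      rw [Finset.filter_filter]
    have h1 : ((d v : ZMod 2)) = 0 := by
      have hsb : ((d v : ZMod 2))
          = ∑ e ∈ Finset.univ.filter (fun e : G.edgeSet => v ∈ (e : Sym2 V)),
              (if η e = 1 then (1 : ZMod 2) else 0) := by
        rw [hd]
        simp only [hfilt]
        rw [Finset.sum_boole]
      have hsc : (∑ e ∈ Finset.univ.filter (fun e : G.edgeSet => v ∈ (e : Sym2 V)),
              (if η e = 1 then (1 : ZMod 2) else 0))
          = ∑ e ∈ Finset.univ.filter (fun e : G.edgeSet => v ∈ (e : Sym2 V)), η e :=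
        Finset.sum_congr rfl fun e _ => by
          rcases htwo (η e) with h | h <;> simp [h]
      rw [hsb, hsc, hsum v]
    have := (ZMod.natCast_eq_zero_iff (d v) 2).mp h1
    exact even_iff_two_dvd.mpr this
  -- d v ≤ 3
  have hle : ∀ v, d v ≤ 3 := by
    intro v
    have hsub : (Finset.univ.filter (fun e : G.edgeSet => v ∈ (e : Sym2 V) ∧ η e = 1))
        ⊆ (Finset.univ.filter (fun e : G.edgeSet => v ∈ (e : Sym2 V))) := by
      intro e he
      simp only [Finset.mem_filter, Finset.mem_univ, true_and] at he ⊢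
      exact he.1
    have hcard : (Finset.univ.filter (fun e : G.edgeSet => v ∈ (e : Sym2 V))).card
        = G.degree v := by
      rw [← SimpleGraph.card_incidenceFinset_eq_degree]
      refine Finset.card_bij (fun e _ => (e : Sym2 V)) ?_ ?_ ?_
      · intro e he
        simp only [Finset.mem_filter, Finset.mem_univ, true_and] at he
        rw [SimpleGraph.mem_incidenceFinset]
        exact ⟨e.2, he⟩
      · intro e₁ _ e₂ _ h
        exact Subtype.ext h
      · intro x hx
        rw [SimpleGraph.mem_incidenceFinset] at hx
        exact ⟨⟨x, hx.1⟩, by simp [hx.2], rfl⟩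
    calc d v ≤ (Finset.univ.filter (fun e : G.edgeSet => v ∈ (e : Sym2 V))).card :=
          Finset.card_le_card hsub
      _ = 3 := by rw [hcard, hcubic]
  -- double counting
  have hdc : ∀ A : Finset V, ∑ v ∈ A, d v
      = ∑ e ∈ S, (A.filter (fun v => v ∈ (e : Sym2 V))).card := by
    intro A
    calc ∑ v ∈ A, d v
        = ∑ v ∈ A, ∑ e ∈ S, (if v ∈ (e : Sym2 V) then 1 else 0) := by
          refine Finset.sum_congr rfl fun v _ => ?_
          rw [hdS v, Finset.card_filter]
      _ = ∑ e ∈ S, ∑ v ∈ A, (if v ∈ (e : Sym2 V) then 1 else 0) := Finset.sum_comm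
      _ = ∑ e ∈ S, (A.filter (fun v => v ∈ (e : Sym2 V))).card := by
          refine Finset.sum_congr rfl fun e _ => ?_
          rw [Finset.card_filter]
  -- total sum over all vertices is 2 * S.card
  have htotal : ∑ v, d v = 2 * S.card := by
    rw [hdc Finset.univ]
    rw [Finset.sum_congr rfl fun (e : G.edgeSet) _ => stmt18_card_two G e e.2]
    rw [Finset.sum_const, smul_eq_mul, mul_comm]
  -- S.card is even, by summing over color-0 vertices
  have hSev : Even S.card := by
    set A : Finset V := Finset.univ.filter (fun v => C v = 0) with hA
    have h1 : ∑ v ∈ A, d v = S.card := by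
      rw [hdc A]
      have : ∀ e ∈ S, (A.filter (fun v => v ∈ (e : Sym2 V))).card = 1 := by
        intro e _
        rw [hA, Finset.filter_filter]
        rw [show (Finset.univ.filter fun v => C v = 0 ∧ v ∈ (e : Sym2 V)) =
            (Finset.univ.filter fun v => v ∈ (e : Sym2 V) ∧ C v = 0) from
          Finset.filter_congr fun v _ => by simp [and_comm]]
        exact stmt18_card_one G C e e.2
      rw [Finset.sum_congr rfl this, Finset.sum_const, smul_eq_mul, mul_one]
    rw [← h1]
    exact even_iff_two_dvd.mpr (Finset.dvd_sum fun v _ => even_iff_two_dvd.mp (hev v))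
  -- the set of Type II vertices
  set T : Finset V :=
    Finset.univ.filter (fun v => ∃ e : G.edgeSet, v ∈ (e : Sym2 V) ∧ η e = 1) with hT
  have hTne : ∀ v, (∃ e : G.edgeSet, v ∈ (e : Sym2 V) ∧ η e = 1) ↔ d v ≠ 0 := by
    intro v
    rw [hd]
    constructor
    · rintro ⟨e, he⟩
      exact Finset.card_ne_zero_of_mem (a := e) (by simp [he.1, he.2])
    · intro h
      obtain ⟨e, he⟩ := Finset.card_ne_zero.mp h
      simp only [Finset.mem_filter, Finset.mem_univ, true_and] at he
      exact ⟨e, he⟩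
  have hsumT : ∑ v, d v = 2 * T.card := by
    rw [← Finset.sum_filter_of_ne (p := fun v =>
      ∃ e : G.edgeSet, v ∈ (e : Sym2 V) ∧ η e = 1)
      (fun v _ h => (hTne v).mpr h), ← hT]
    have : ∀ v ∈ T, d v = 2 := by
      intro v hv
      rw [hT, Finset.mem_filter] at hv
      have hne := (hTne v).mp hv.2
      obtain ⟨k, hk⟩ := hev v
      have := hle v
      omega
    rw [Finset.sum_congr rfl this, Finset.sum_const, smul_eq_mul, mul_comm]
  have hTS : T.card = S.card := by
    have := htotal.symm.trans hsumT
    omega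
  have hfin : Nat.card {v : V // ∃ e : G.edgeSet, v ∈ (e : Sym2 V) ∧ η e = 1}
      = T.card := by
    rw [Nat.card_eq_fintype_card, Fintype.card_subtype]
  rw [hfin, hTS]
  exact hSev
end
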